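/- arXiv:1809.04719 — 3 statements merged into one kernel-verified Lean document; each statement's English description precedes it below -/
import Mathlib

section
/- Let (ξᵢ) be random variables with P(ρₙ > u) ≤ e^{−u} for all u ≥ 0 and n ≥ 3, where ρₙ = (max_{i≤n} ξᵢ − ν⁻¹(ln n))·ν′(ν⁻¹(ln n)). Set zₙ = ν⁻¹(ln n)·ν′(ν⁻¹(ln n)) and let K = inf{Y > 0 : for all ε > 0, Σₙ exp(−(Y+ε)zₙ) < ∞}. Then almost surely limsup_{n→∞} (max_{i≤n} ξᵢ)/ν⁻¹(ln n) ≤ 1 + K. -/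
/-!
Convexity of `ν` puts its tangent line at `q n` below `ν 0`, so `z n ≥ log n - ν 0`; hence
`∑ exp (-(Y * z n))` converges for every `Y > 1`, the set defining `K` is nonempty and
`∑ exp (-((K + ε) * z n)) < ∞` for every `ε > 0`. The tail bound at `u = (K + ε) z n` and
Borel–Cantelli then give, almost surely and for all large `n`, `ρₙ ≤ (K + ε) zₙ`, i.e.
`M n / q n ≤ 1 + K + ε`. Letting `ε ↓ 0` along a sequence finishes the proof.
-/

open MeasureTheory Real Filter

lemma ConvexOn.sub_le_mul_of_hasDerivAt {S : Set ℝ} {f : ℝ → ℝ} {x y f' : ℝ}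
    (hf : ConvexOn ℝ S f) (hx : x ∈ S) (hy : y ∈ S) (hxy : x ≤ y) (hf' : HasDerivAt f f' y) :
    f y - f x ≤ (y - x) * f' := by
  rcases hxy.eq_or_lt with rfl | hlt
  · simp
  have hslope := hf.slope_le_of_hasDerivAt hx hy hlt hf'
  rw [slope_def_field, div_le_iff₀ (sub_pos.2 hlt)] at hslope
  linarith

lemma summable_exp_neg_mul_of_log_sub_le {z : ℕ → ℝ} {c p : ℝ} (hp : 1 < p)
    (hz : ∀ᶠ n : ℕ in atTop, log n - c ≤ z n) :
    Summable fun n => exp (-(p * z n)) := by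
  have hpow : Summable fun n : ℕ => exp (p * c) * (n : ℝ) ^ (-p) :=
    (Real.summable_nat_rpow.2 (by linarith)).mul_left _
  refine hpow.of_norm_bounded_eventually_nat ?_
  filter_upwards [hz, eventually_gt_atTop 0] with n hzn hn
  have hn' : (0 : ℝ) < n := Nat.cast_pos.2 hn
  rw [Real.norm_of_nonneg (exp_pos _).le, rpow_def_of_pos hn', ← exp_add, exp_le_exp]
  nlinarith

lemma summable_exp_neg_sInf_add_mul {z : ℕ → ℝ} (hz : ∀ᶠ n in atTop, 0 ≤ z n) {S : Set ℝ}
    (hS : ∀ Y ∈ S, ∀ ε : ℝ, 0 < ε → Summable fun n => exp (-((Y + ε) * z n)))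
    (hne : S.Nonempty) {ε : ℝ} (hε : 0 < ε) :
    Summable fun n => exp (-((sInf S + ε) * z n)) := by
  obtain ⟨Y, hY, hYlt⟩ := Real.lt_sInf_add_pos hne (half_pos hε)
  refine (hS Y hY _ (half_pos hε)).of_norm_bounded_eventually_nat ?_
  filter_upwards [hz] with n hzn
  rw [Real.norm_of_nonneg (exp_pos _).le, exp_le_exp, neg_le_neg_iff]
  exact mul_le_mul_of_nonneg_right (by linarith) hzn

lemma ae_eventually_notMem_of_measureReal_le {Ω : Type*} [MeasurableSpace Ω] {μ : Measure Ω}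
    [IsFiniteMeasure μ] {s : ℕ → Set Ω} {a : ℕ → ℝ} (ha : Summable a)
    (hs : ∀ᶠ n in atTop, μ.real (s n) ≤ a n) :
    ∀ᵐ ω ∂μ, ∀ᶠ n in atTop, ω ∉ s n := by
  have hsum : Summable fun n => μ.real (s n) :=
    ha.of_norm_bounded_eventually_nat (hs.mono fun n hn => by
      rwa [Real.norm_of_nonneg measureReal_nonneg])
  refine ae_eventually_notMem ?_
  simpa only [ofReal_measureReal (measure_ne_top μ _)] using hsum.tsum_ofReal_ne_top

/-- `0 ≤ a` is needed: the junk `limsup` of a sequence tending to `-∞` is `0`. -/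
lemma Real.limsup_le_of_eventually_le {ι : Type*} {l : Filter ι} {u : ι → ℝ} {a : ℝ}
    (ha : 0 ≤ a) (h : ∀ᶠ n in l, u n ≤ a) : limsup u l ≤ a := by
  rw [limsup_eq]
  by_cases hbdd : BddBelow {b | ∀ᶠ n in l, u n ≤ b}
  · exact csInf_le hbdd h
  · rwa [Real.sInf_of_not_bddBelow hbdd]

lemma div_le_one_add_of_sub_mul_le {m q d c : ℝ} (hq : 0 < q) (hd : 0 < d)
    (h : (m - q) * d ≤ c * (q * d)) : m / q ≤ 1 + c := by
  rw [div_le_iff₀ hq]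
  nlinarith

lemma ae_le_of_forall_pos_ae_le_add {Ω : Type*} [MeasurableSpace Ω] {μ : Measure Ω}
    {f : Ω → ℝ} {c : ℝ} (h : ∀ ε : ℝ, 0 < ε → ∀ᵐ ω ∂μ, f ω ≤ c + ε) :
    ∀ᵐ ω ∂μ, f ω ≤ c := by
  have hall : ∀ᵐ ω ∂μ, ∀ k : ℕ, f ω ≤ c + 1 / ((k : ℝ) + 1) :=
    ae_all_iff.2 fun k => h _ Nat.one_div_pos_of_nat
  filter_upwards [hall] with ω hω
  simpa using ge_of_tendsto' (tendsto_const_nhds.add tendsto_one_div_add_atTop_nhds_zero_nat) hω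

theorem limsup_max_le_one_add_K_general
    {Ω : Type*} [MeasurableSpace Ω] (P : Measure Ω) [IsProbabilityMeasure P]
    (ν ν' : ℝ → ℝ)
    (hconv : ConvexOn ℝ (Set.Ici 0) ν)
    (hderiv : ∀ x : ℝ, HasDerivAt ν (ν' x) x)
    (M : ℕ → Ω → ℝ)
    (q z : ℕ → ℝ)
    (hq : ∀ n : ℕ, 3 ≤ n → 0 ≤ q n ∧ ν (q n) = Real.log n)
    (hz : ∀ n : ℕ, z n = q n * ν' (q n))
    (htail : ∀ n : ℕ, 3 ≤ n → ∀ u : ℝ, 0 ≤ u →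
      (P {ω | u < (M n ω - q n) * ν' (q n)}).toReal ≤ Real.exp (-u))
    (K : ℝ)
    (hK : K = sInf {Y : ℝ | 0 < Y ∧ ∀ ε : ℝ, 0 < ε →
      Summable (fun n : ℕ => Real.exp (-((Y + ε) * z n)))}) :
    ∀ᵐ ω ∂P, Filter.limsup (fun n : ℕ => M n ω / q n) atTop ≤ 1 + K := by
  have hz_ge : ∀ᶠ n : ℕ in atTop, log n - ν 0 ≤ z n := by
    filter_upwards [eventually_ge_atTop 3] with n hn
    obtain ⟨hq0, hqlog⟩ := hq n hn
    simpa [hz, hqlog, mul_comm] using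
      hconv.sub_le_mul_of_hasDerivAt Set.self_mem_Ici hq0 hq0 (hderiv (q n))
  have hz_pos : ∀ᶠ n : ℕ in atTop, 0 < z n := by
    filter_upwards [hz_ge, (tendsto_log_atTop.comp tendsto_natCast_atTop_atTop).eventually_gt_atTop
      (ν 0)] with n hzn hlog
    simp only [Function.comp_apply] at hlog
    linarith
  have hK0 : 0 ≤ K := hK ▸ Real.sInf_nonneg fun Y hY => hY.1.le
  have hsum : ∀ ε : ℝ, 0 < ε → Summable fun n => exp (-((K + ε) * z n)) := fun ε hε => by
    rw [hK]
    refine summable_exp_neg_sInf_add_mul (hz_pos.mono fun _ => le_of_lt) (fun Y hY => hY.2) ?_ hε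
    exact ⟨1, one_pos, fun δ hδ => summable_exp_neg_mul_of_log_sub_le (by linarith) hz_ge⟩
  refine ae_le_of_forall_pos_ae_le_add fun ε hε => ?_
  have hBC := ae_eventually_notMem_of_measureReal_le (μ := P)
    (s := fun n => {ω | (K + ε) * z n < (M n ω - q n) * ν' (q n)}) (hsum ε hε) <| by
      filter_upwards [eventually_ge_atTop 3, hz_pos] with n hn hzn
      exact htail n hn _ (by positivity)
  filter_upwards [hBC] with ω hω
  refine Real.limsup_le_of_eventually_le (by positivity) ?_
  filter_upwards [hω, hz_pos, eventually_ge_atTop 3] with n hn hzn h3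
  have hqn : 0 < q n := (hq n h3).1.lt_of_ne fun h => by simp [hz, ← h] at hzn
  rw [add_assoc]
  exact div_le_one_add_of_sub_mul_le hqn (pos_of_mul_pos_right (hz n ▸ hzn) hqn.le)
    (by rw [← hz]; exact not_lt.1 hn)

/-- Borel–Cantelli consequence: a.s. `limsup (max_{i≤n} ξᵢ)/ν⁻¹(ln n) ≤ 1 + K`. -/
theorem limsup_max_le_one_add_K
    {Ω : Type*} [MeasurableSpace Ω] (P : Measure Ω) [IsProbabilityMeasure P]
    (ν ν' : ℝ → ℝ)
    (hconv : ConvexOn ℝ (Set.Ici 0) ν)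
    (hderiv : ∀ x : ℝ, HasDerivAt ν (ν' x) x)
    (hν'mono : StrictMono ν')
    (hνlim : Tendsto ν atTop atTop) (hν'lim : Tendsto ν' atTop atTop)
    (ξ : ℕ → Ω → ℝ)
    (M : ℕ → Ω → ℝ)
    (hM : ∀ n : ℕ, ∀ hn : 0 < n, ∀ ω : Ω,
      M n ω = (Finset.range n).sup' (Finset.nonempty_range_iff.mpr hn.ne') (fun i => ξ i ω))
    (q z : ℕ → ℝ)
    (hq : ∀ n : ℕ, 3 ≤ n → 0 ≤ q n ∧ ν (q n) = Real.log n)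
    (hz : ∀ n : ℕ, z n = q n * ν' (q n))
    (htail : ∀ n : ℕ, 3 ≤ n → ∀ u : ℝ, 0 ≤ u →
      (P {ω | u < (M n ω - q n) * ν' (q n)}).toReal ≤ Real.exp (-u))
    (K : ℝ)
    (hK : K = sInf {Y : ℝ | 0 < Y ∧ ∀ ε : ℝ, 0 < ε →
      Summable (fun n : ℕ => Real.exp (-((Y + ε) * z n)))}) :
    ∀ᵐ ω ∂P, Filter.limsup (fun n : ℕ => M n ω / q n) atTop ≤ 1 + K :=
  limsup_max_le_one_add_K_general P ν ν' hconv hderiv M q z hq hz htail K hK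
end

section
/- Let (ξᵢ) be random variables with P(ξᵢ > x) ≤ exp(−x²/2) for x ≥ 1. Then for n ≥ 3, max_{i≤n} ξᵢ = √(2 ln n) + ρₙ/√(2 ln n) with P(ρₙ > u) ≤ e^{−u} for u ≥ 0, and almost surely limsup_{n→∞} (max_{i≤n} ξᵢ)/√(2 ln n) ≤ 3/2. -/
/-!
By the union bound, `P(max_{i<n} ξᵢ > x) ≤ n e^{-x²/2}` for `x ≥ 1`. With `s = √(2 ln n)`, so that
`n = e^{s²/2}`, put `ρₙ = (maxᵢ ξᵢ - s) s`; then `ρₙ > u` means `maxᵢ ξᵢ > s + u/s`, and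
`(s + u/s)²/2 ≥ s²/2 + u` gives `P(ρₙ > u) ≤ e^{-u}`. Likewise `P(maxᵢ ξᵢ > 3s/2) ≤ n^{1 - 9/4}`,
which is summable, so by Borel–Cantelli `maxᵢ ξᵢ ≤ 3s/2` eventually, almost surely.
-/

open MeasureTheory Real Filter

lemma one_le_log_of_three_le {a : ℝ} (ha : 3 ≤ a) : 1 ≤ log a := by
  rw [le_log_iff_exp_le (by linarith)]
  linarith [exp_one_lt_d9]

lemma one_le_sqrt_two_mul_log_of_three_le {a : ℝ} (ha : 3 ≤ a) : 1 ≤ √(2 * log a) :=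
  one_le_sqrt.2 (by linarith [one_le_log_of_three_le ha])

lemma sq_sqrt_two_mul_log_of_three_le {a : ℝ} (ha : 3 ≤ a) : √(2 * log a) ^ 2 = 2 * log a :=
  sq_sqrt (by linarith [one_le_log_of_three_le ha])

/-- A limsup in `ℝ` that is not cobounded takes the junk value `0`. -/
lemma limsup_le_of_eventually_le_of_nonneg {ι : Type*} {l : Filter ι} {u : ι → ℝ} {c : ℝ}
    (hc : 0 ≤ c) (h : ∀ᶠ i in l, u i ≤ c) : limsup u l ≤ c := by
  by_cases hu : l.IsCoboundedUnder (· ≤ ·) u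
  · exact limsup_le_of_le hu h
  · rwa [Real.limsup_of_not_isCoboundedUnder hu]

lemma toReal_measure_lt_sup'_le_card_mul {Ω ι : Type*} [MeasurableSpace Ω] (μ : Measure Ω)
    [IsFiniteMeasure μ] {s : Finset ι} (hs : s.Nonempty) {f : ι → Ω → ℝ} {x b : ℝ}
    (hb : ∀ i ∈ s, (μ {ω | x < f i ω}).toReal ≤ b) :
    (μ {ω | x < s.sup' hs fun i => f i ω}).toReal ≤ s.card * b := by
  have hunion : {ω | x < s.sup' hs fun i => f i ω} = ⋃ i ∈ s, {ω | x < f i ω} := by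
    ext ω
    simp [Finset.lt_sup'_iff]
  calc (μ {ω | x < s.sup' hs fun i => f i ω}).toReal
      ≤ (∑ i ∈ s, μ {ω | x < f i ω}).toReal := by
        rw [hunion]
        exact ENNReal.toReal_mono (ENNReal.sum_ne_top.2 fun i _ => measure_ne_top μ _)
          (measure_biUnion_finset_le _ _)
    _ = ∑ i ∈ s, (μ {ω | x < f i ω}).toReal := ENNReal.toReal_sum fun i _ => measure_ne_top μ _
    _ ≤ ∑ _i ∈ s, b := Finset.sum_le_sum hb
    _ = s.card * b := by rw [Finset.sum_const, nsmul_eq_mul]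

lemma ae_eventually_notMem_of_toReal_le {Ω : Type*} [MeasurableSpace Ω] {μ : Measure Ω}
    [IsFiniteMeasure μ] {t : ℕ → Set Ω} {b : ℕ → ℝ} (hb : Summable b)
    (ht : ∀ n, (μ (t n)).toReal ≤ b n) : ∀ᵐ ω ∂μ, ∀ᶠ n in atTop, ω ∉ t n := by
  have hb0 : ∀ n, 0 ≤ b n := fun n => ENNReal.toReal_nonneg.trans (ht n)
  refine ae_eventually_notMem (ne_top_of_le_ne_top (ENNReal.ofReal_ne_top (r := ∑' n, b n)) ?_)
  rw [ENNReal.ofReal_tsum_of_nonneg hb0 hb]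
  exact ENNReal.tsum_le_tsum fun n =>
    (ENNReal.le_ofReal_iff_toReal_le (measure_ne_top μ _) (hb0 n)).2 (ht n)

lemma mul_exp_neg_sq_add_div_half_le {a s u : ℝ} (ha : 0 < a) (hs : 0 < s)
    (hsq : s ^ 2 = 2 * log a) : a * exp (-((s + u / s) ^ 2 / 2)) ≤ exp (-u) := by
  have hexpand : (s + u / s) ^ 2 / 2 = log a + u + (u / s) ^ 2 / 2 := by
    field_simp
    rw [hsq]
    ring
  calc a * exp (-((s + u / s) ^ 2 / 2)) ≤ a * exp (-(log a + u)) := by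
        gcongr
        nlinarith [sq_nonneg (u / s)]
    _ = exp (-u) := by
        rw [neg_add, exp_add, exp_neg, exp_log ha]
        field_simp

lemma mul_exp_neg_mul_sq_half {a s : ℝ} (ha : 0 < a) (hsq : s ^ 2 = 2 * log a) (c : ℝ) :
    a * exp (-((c * s) ^ 2 / 2)) = a ^ (1 - c ^ 2) := by
  rw [rpow_sub ha, rpow_one, rpow_def_of_pos ha, mul_pow, hsq, div_eq_mul_inv a, ← exp_neg]
  ring_nf

section GaussianTail

variable {Ω : Type*} [MeasurableSpace Ω] {P : Measure Ω} {X : Ω → ℝ} {a : ℝ}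

lemma toReal_measure_lt_mul_sqrt_two_mul_log_le (ha : 3 ≤ a)
    (hX : ∀ x, 1 ≤ x → (P {ω | x < X ω}).toReal ≤ a * exp (-(x ^ 2 / 2))) {u : ℝ} (hu : 0 ≤ u) :
    (P {ω | u < (X ω - √(2 * log a)) * √(2 * log a)}).toReal ≤ exp (-u) := by
  set s := √(2 * log a)
  have hs1 : 1 ≤ s := one_le_sqrt_two_mul_log_of_three_le ha
  have hs : 0 < s := one_pos.trans_le hs1
  have hset : {ω | u < (X ω - s) * s} = {ω | s + u / s < X ω} := by
    ext ω
    rw [Set.mem_ofPred_eq, Set.mem_ofPred_eq, ← lt_sub_iff_add_lt', div_lt_iff₀ hs]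
  rw [hset]
  calc (P {ω | s + u / s < X ω}).toReal ≤ a * exp (-((s + u / s) ^ 2 / 2)) :=
        hX _ (by linarith [div_nonneg hu hs.le])
    _ ≤ exp (-u) := mul_exp_neg_sq_add_div_half_le (by linarith) hs
        (sq_sqrt_two_mul_log_of_three_le ha)

lemma toReal_measure_three_halves_sqrt_two_mul_log_lt_le (ha : 3 ≤ a)
    (hX : ∀ x, 1 ≤ x → (P {ω | x < X ω}).toReal ≤ a * exp (-(x ^ 2 / 2))) :
    (P {ω | 3 / 2 * √(2 * log a) < X ω}).toReal ≤ a ^ (-(5 / 4) : ℝ) := by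
  have hs1 := one_le_sqrt_two_mul_log_of_three_le ha
  calc (P {ω | 3 / 2 * √(2 * log a) < X ω}).toReal
      ≤ a * exp (-((3 / 2 * √(2 * log a)) ^ 2 / 2)) := hX _ (by linarith)
    _ = a ^ (-(5 / 4) : ℝ) := by
        rw [mul_exp_neg_mul_sq_half (by linarith) (sq_sqrt_two_mul_log_of_three_le ha)]
        norm_num

end GaussianTail

/-- Subgaussian case `m = 2`: representation of the maximum, tail bound for `ρₙ`,
and a.s. `limsup maxᵢξᵢ/√(2 ln n) ≤ 3/2`. -/
theorem max_tail_estimate_subgaussian_case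
    {Ω : Type*} [MeasurableSpace Ω] (P : Measure Ω) [IsProbabilityMeasure P]
    (ξ : ℕ → Ω → ℝ)
    (htail : ∀ i : ℕ, ∀ x : ℝ, 1 ≤ x →
      (P {ω | x < ξ i ω}).toReal ≤ Real.exp (-(x ^ 2 / 2)))
    (M : ℕ → Ω → ℝ)
    (hM : ∀ n : ℕ, ∀ hn : 0 < n, ∀ ω : Ω,
      M n ω = (Finset.range n).sup' (Finset.nonempty_range_iff.mpr hn.ne') (fun i => ξ i ω)) :
    ∃ ρ : ℕ → Ω → ℝ,
      (∀ n : ℕ, 3 ≤ n → ∀ ω : Ω,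
        M n ω = Real.sqrt (2 * Real.log n) + ρ n ω / Real.sqrt (2 * Real.log n))
      ∧ (∀ n : ℕ, 3 ≤ n → ∀ u : ℝ, 0 ≤ u →
        (P {ω | u < ρ n ω}).toReal ≤ Real.exp (-u))
      ∧ (∀ᵐ ω ∂P, Filter.limsup
          (fun n : ℕ => M n ω / Real.sqrt (2 * Real.log n)) atTop ≤ 3 / 2) := by
  have h3 : ∀ n : ℕ, 3 ≤ n → (3 : ℝ) ≤ n := fun n hn => by exact_mod_cast hn
  have hMtail : ∀ n : ℕ, 3 ≤ n → ∀ x : ℝ, 1 ≤ x →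
      (P {ω | x < M n ω}).toReal ≤ n * exp (-(x ^ 2 / 2)) := by
    intro n hn x hx
    simp_rw [hM n (by omega)]
    have hmax := toReal_measure_lt_sup'_le_card_mul P (f := ξ)
      (Finset.nonempty_range_iff.mpr (by omega : n ≠ 0)) fun i _ => htail i x hx
    rwa [Finset.card_range] at hmax
  refine ⟨fun n ω => (M n ω - √(2 * log n)) * √(2 * log n), fun n hn ω => ?_,
    fun n hn u hu => toReal_measure_lt_mul_sqrt_two_mul_log_le (h3 n hn) (hMtail n hn) hu, ?_⟩
  · have hs := one_le_sqrt_two_mul_log_of_three_le (h3 n hn)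
    field_simp
    ring
  -- The bad events are restricted to `n ≥ 3` so that the bound `n ^ (-5/4)` holds for all `n`.
  have hBC := ae_eventually_notMem_of_toReal_le (μ := P)
    (t := fun n => {ω | 3 ≤ n ∧ 3 / 2 * √(2 * log n) < M n ω})
    (summable_nat_rpow.2 (by norm_num : -(5 / 4 : ℝ) < -1)) fun n => by
      by_cases hn : 3 ≤ n
      · simpa [hn] using toReal_measure_three_halves_sqrt_two_mul_log_lt_le (h3 n hn) (hMtail n hn)
      · simp [hn, rpow_nonneg]
  filter_upwards [hBC] with ω hω
  refine limsup_le_of_eventually_le_of_nonneg (by norm_num) ?_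
  filter_upwards [hω, eventually_ge_atTop 3] with n hle hn
  have hs := one_le_sqrt_two_mul_log_of_three_le (h3 n hn)
  rw [div_le_iff₀ (by linarith)]
  simpa [hn] using hle
end

section
/- Let (ξᵢ) be independent random variables with P(ξᵢ > x) = exp(−ν(x)) for x ≥ 1, ν a C² Young–Orlicz function with ν, ν′ strictly increasing to infinity. Fix n ≥ 3 and set qₙ = ν⁻¹(ln n), wₙ = 1/ν′(qₙ), ρₙ = (max_{i≤n}ξᵢ − qₙ)/wₙ. Suppose εₙ, Θₙ, γₙ > 0 satisfy 2Rₙ = sup_{0≤u≤Θₙ} |ν″(qₙ + u wₙ)|, εₙ = Rₙ wₙ², Θₙ = γₙ/√εₙ. Then for all u ∈ [1, Θₙ] (with qₙ + u wₙ ≥ 1): P(ρₙ > u) ≥ e^{−γₙ²} e^{−u} − e^{−2u}. -/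
open MeasureTheory Real Filter ProbabilityTheory

/-!
With `c = qₙ + u wₙ` and `p = P(ξᵢ > c) = exp (-ν c)`, independence gives
`P(ρₙ > u) = 1 - (1 - p)ⁿ ≥ 1 - exp (-n p)`; this is increasing in `n p`, and
`1 - exp (-x) ≥ x - x² / 2` for `x ≥ 0`. A second order Taylor expansion of `ν` at `qₙ`, where
`ν' qₙ · wₙ = 1` and `|ν''| ≤ 2 Rₙ`, gives `ν c ≤ ln n + u + εₙ u² ≤ ln n + u + γₙ²`, that is
`n p ≥ a := e^{-γₙ²} e^{-u}`. Hence `P(ρₙ > u) ≥ a - a² / 2 ≥ a - e^{-2u}`.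
-/

theorem abs_sub_sub_mul_le_of_abs_deriv2_le {f f' f'' : ℝ → ℝ} {a b M : ℝ}
    (hf : ∀ x, HasDerivAt f (f' x) x) (hf' : ∀ x, HasDerivAt f' (f'' x) x) (hab : a ≤ b)
    (hM : ∀ x ∈ Set.Icc a b, |f'' x| ≤ M) :
    |f b - f a - f' a * (b - a)| ≤ M / 2 * (b - a) ^ 2 := by
  have hf'_lip : ∀ x ∈ Set.Icc a b, |f' x - f' a| ≤ M * (x - a) := fun x hx => by
    simpa [abs_of_nonneg (sub_nonneg.2 hx.1)] using
      (convex_Icc a b).norm_image_sub_le_of_norm_hasDerivWithin_le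
        (fun y _ => (hf' y).hasDerivWithinAt) hM (Set.left_mem_Icc.2 hab) hx
  refine image_norm_le_of_norm_deriv_right_le_deriv_boundary
    (f := fun x => f x - f a - f' a * (x - a)) (f' := fun x => f' x - f' a)
    (B := fun x => M / 2 * (x - a) ^ 2) (B' := fun x => M * (x - a)) ?_ (fun x _ => ?_)
    (by simp) (fun x => ?_) (fun x hx => hf'_lip x (Set.Ico_subset_Icc_self hx))
    (Set.right_mem_Icc.2 hab)
  · exact fun x _ => ((hf x).continuousAt.sub continuousAt_const).sub
      (continuousAt_const.mul (continuousAt_id.sub continuousAt_const)) |>.continuousWithinAt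
  · simpa using (((hf x).sub_const (f a)).fun_sub
      (((hasDerivAt_id x).sub_const a).const_mul (f' a))).hasDerivWithinAt
  · exact ((((hasDerivAt_id' x).sub_const a).fun_pow 2).const_mul (M / 2)).congr_deriv
      (by norm_num; ring)

theorem le_add_add_sq_of_two_mul_eq_sSup_abs_deriv2 {ν ν' ν'' : ℝ → ℝ}
    (hderiv : ∀ x, HasDerivAt ν (ν' x) x) (hderiv' : ∀ x, HasDerivAt ν' (ν'' x) x)
    {q w R ε Θ γ u : ℝ} (hw : ν' q * w = 1) (hwpos : 0 < w) (hε : 0 < ε)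
    (hR : 2 * R = sSup {y : ℝ | ∃ u ∈ Set.Icc (0 : ℝ) Θ, y = |ν'' (q + u * w)|})
    (hεR : ε = R * w ^ 2) (hΘ : Θ = γ / √ε) (hu : u ∈ Set.Icc 0 Θ) :
    ν (q + u * w) ≤ ν q + u + γ ^ 2 := by
  obtain ⟨hu0, huΘ⟩ := hu
  have hν'' : ∀ x ∈ Set.Icc q (q + u * w), |ν'' x| ≤ 2 * R := fun x hx => by
    rw [hR]
    refine le_csSup ?_ ⟨(x - q) / w, ⟨?_, ?_⟩, by rw [div_mul_cancel₀ _ hwpos.ne', add_sub_cancel]⟩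
    · -- otherwise `sSup` is the junk value `0`, forcing `ε = 0`
      by_contra h
      rw [Real.sSup_of_not_bddAbove h] at hR
      simp only [show R = 0 by linarith, zero_mul] at hεR
      linarith
    · exact div_nonneg (by linarith [hx.1]) hwpos.le
    · rw [div_le_iff₀ hwpos]
      nlinarith [hx.2]
  have hquad : R * (u * w) ^ 2 ≤ γ ^ 2 := by
    have h : u * √ε ≤ γ := by rwa [hΘ, le_div_iff₀ (sqrt_pos.2 hε)] at huΘ
    calc R * (u * w) ^ 2 = (u * √ε) ^ 2 := by rw [mul_pow u √ε, sq_sqrt hε.le, hεR]; ring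
      _ ≤ γ ^ 2 := pow_le_pow_left₀ (by positivity) h 2
  have htaylor := abs_sub_sub_mul_le_of_abs_deriv2_le hderiv hderiv'
    (le_add_of_nonneg_right (by positivity)) hν''
  rw [add_sub_cancel_left, ← mul_assoc, mul_comm (ν' q) u, mul_assoc, hw, mul_one] at htaylor
  linarith [(abs_le.1 htaylor).2]

theorem measureReal_lt_sup'_eq_one_sub_prod {Ω ι : Type*} [MeasurableSpace Ω] {P : Measure Ω}
    [IsProbabilityMeasure P] {ξ : ι → Ω → ℝ} (hmeas : ∀ i, Measurable (ξ i))
    (hindep : iIndepFun ξ P) (s : Finset ι) (hs : s.Nonempty) (c : ℝ) :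
    P.real {ω | c < s.sup' hs (fun i => ξ i ω)} = 1 - ∏ i ∈ s, (1 - P.real {ω | c < ξ i ω}) := by
  have hevent : {ω | c < s.sup' hs (fun i => ξ i ω)} = (⋂ i ∈ s, ξ i ⁻¹' Set.Iic c)ᶜ := by
    ext ω
    simp [Finset.lt_sup'_iff]
  have hprod : P.real (⋂ i ∈ s, ξ i ⁻¹' Set.Iic c) = ∏ i ∈ s, P.real (ξ i ⁻¹' Set.Iic c) := by
    simp only [measureReal_def, hindep.measure_inter_preimage_eq_mul s
      (sets := fun _ => Set.Iic c) (fun _ _ => measurableSet_Iic), ENNReal.toReal_prod]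
  have hcompl : ∀ i, P.real (ξ i ⁻¹' Set.Iic c) = 1 - P.real {ω | c < ξ i ω} := fun i => by
    rw [← probReal_compl_eq_one_sub (measurableSet_lt measurable_const (hmeas i))]
    congr 1
    ext ω
    simp
  rw [hevent, probReal_compl_eq_one_sub (Finset.measurableSet_biInter s
    fun i _ => hmeas i measurableSet_Iic), hprod]
  simp only [hcompl]

theorem exp_neg_le_one_sub_add_sq_div_two {x : ℝ} (hx : 0 ≤ x) :
    exp (-x) ≤ 1 - x + x ^ 2 / 2 := by
  have hpos : 0 < 1 + x + x ^ 2 / 2 := by positivity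
  calc exp (-x) = (exp x)⁻¹ := exp_neg x
    _ ≤ (1 + x + x ^ 2 / 2)⁻¹ := inv_anti₀ hpos (quadratic_le_exp_of_nonneg hx)
    _ ≤ 1 - x + x ^ 2 / 2 := by
      rw [inv_le_iff_one_le_mul₀ hpos]
      nlinarith [pow_nonneg hx 4]

theorem one_sub_pow_le_exp_neg_mul {p : ℝ} (hp : p ≤ 1) (n : ℕ) :
    (1 - p) ^ n ≤ exp (-(n * p)) := by
  rw [← mul_neg, exp_nat_mul]
  exact pow_le_pow_left₀ (sub_nonneg.2 hp) (one_sub_le_exp_neg p) n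

theorem sub_sq_div_two_le_one_sub_one_sub_pow {p a : ℝ} {n : ℕ} (hp : p ≤ 1) (ha : 0 ≤ a)
    (hnp : a ≤ n * p) : a - a ^ 2 / 2 ≤ 1 - (1 - p) ^ n :=
  calc a - a ^ 2 / 2 ≤ 1 - exp (-a) := by linarith [exp_neg_le_one_sub_add_sq_div_two ha]
    _ ≤ 1 - exp (-(n * p)) := by gcongr
    _ ≤ 1 - (1 - p) ^ n := by linarith [one_sub_pow_le_exp_neg_mul hp n]

/-- Lower estimate for the tail of the normalized maximum, via Bonferroni. -/
theorem max_tail_lower_estimate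
    {Ω : Type*} [MeasurableSpace Ω] (P : Measure Ω) [IsProbabilityMeasure P]
    (ν ν' ν'' : ℝ → ℝ)
    (hderiv : ∀ x : ℝ, HasDerivAt ν (ν' x) x)
    (hderiv' : ∀ x : ℝ, HasDerivAt ν' (ν'' x) x)
    (hν0 : ν 0 = 0) (hν'pos : ∀ x : ℝ, 0 < x → 0 < ν' x)
    (ξ : ℕ → Ω → ℝ) (hmeas : ∀ i, Measurable (ξ i))
    (hindep : iIndepFun ξ P)
    (htail : ∀ i : ℕ, ∀ x : ℝ, 1 ≤ x →
      (P {ω | x < ξ i ω}).toReal = Real.exp (-ν x))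
    (n : ℕ) (hn : 3 ≤ n)
    (q w : ℝ) (hq : 0 ≤ q) (hνq : ν q = Real.log n) (hw : w = 1 / ν' q)
    (R ε Θ γ : ℝ) (hε : 0 < ε)
    (hR : 2 * R = sSup {y : ℝ | ∃ u ∈ Set.Icc (0 : ℝ) Θ, y = |ν'' (q + u * w)|})
    (hεR : ε = R * w ^ 2) (hΘ : Θ = γ / Real.sqrt ε)
    (u : ℝ) (hu : u ∈ Set.Icc (1 : ℝ) Θ) (harg : 1 ≤ q + u * w) :
    Real.exp (-γ ^ 2) * Real.exp (-u) - Real.exp (-(2 * u)) ≤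
      (P {ω | u <
        ((Finset.range n).sup' (Finset.nonempty_range_iff.mpr (by omega))
          (fun i => ξ i ω) - q) / w}).toReal := by
  have hlogn : 0 < log n := log_pos (by exact_mod_cast (by omega : 1 < n))
  have hqpos : 0 < q := hq.lt_of_ne fun h => by rw [← h, hν0] at hνq; linarith
  have hν'q : 0 < ν' q := hν'pos q hqpos
  have hwpos : 0 < w := hw ▸ one_div_pos.2 hν'q
  have hνc : ν (q + u * w) ≤ log n + u + γ ^ 2 := hνq ▸
    le_add_add_sq_of_two_mul_eq_sSup_abs_deriv2 hderiv hderiv' (by rw [hw, mul_one_div_cancel hν'q.ne'])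
      hwpos hε hR hεR hΘ ⟨zero_le_one.trans hu.1, hu.2⟩
  simp_rw [lt_div_iff₀ hwpos, lt_sub_iff_add_lt']
  rw [← measureReal_def, measureReal_lt_sup'_eq_one_sub_prod hmeas hindep]
  simp only [measureReal_def, htail _ _ harg, Finset.prod_const, Finset.card_range]
  set a := exp (-γ ^ 2) * exp (-u) with ha
  have hp1 : exp (-ν (q + u * w)) ≤ 1 := by rw [← htail 0 _ harg]; exact measureReal_le_one
  have hnp : a ≤ n * exp (-ν (q + u * w)) := by
    rw [ha, ← exp_add, ← exp_log (by positivity : (0 : ℝ) < n), ← exp_add]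
    exact exp_le_exp.2 (by linarith)
  have ha2 : a ^ 2 ≤ exp (-(2 * u)) := by
    rw [ha, ← exp_add, sq, ← exp_add]
    exact exp_le_exp.2 (by nlinarith [sq_nonneg γ])
  linarith [sub_sq_div_two_le_one_sub_one_sub_pow hp1 (by positivity) hnp, sq_nonneg a]
end
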